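/- Let b, c ∈ ℂ with |b| ≤ 1, |c| ≤ 1, set u = |2c − 3b| and v = |2c|, assume u ≤ 1, and let α ∈ [0,1). Let ρ₂ be the smallest root in (0,1) of the equation (1 − α) − α(u+v) r − (7 + u v + α + u v α) r² − (8u + 6v + u α) r³ − (9 + 6 u v − α) r⁴ − (8u + 2v − u α − v α) r⁵ − (1 + u v − α − u v α) r⁶ + α u r⁷ = 0 (such a root exists). Then for every f ∈ K³_{b,c} and every z ∈ ℂ with 0 < |z| < ρ₂, one has Re(z·f'(z)/f(z)) > α. (That is, ρ₂ is the radius of starlikeness of order α for the class K³_{b,c}.) -/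

import Mathlib

open Complex ComplexConjugate Metric Set Filter Topology

/-!
Write `f = z f₁` and `g = z g₁`. The function `p = g₁ (1 - z²)` has positive real part and
`p 0 = 1`, so its Cayley transform is `z φ` with `φ` a holomorphic self-map of the closed disc,
`φ 0 = c`; likewise `f₁ / g₁ = 1 + z ψ` with `ψ 0 = 3b - 2c`. Hence
`f = z (1 + z φ) (1 + z ψ) / ((1 - z φ) (1 - z²))`, and `z f' / f` is `1` plus three terms whose
real parts are bounded below, via the Schwarz–Pick lemma for `φ` and `ψ`, by functions of `r = |z|`,
`|c| = v / 2` and `u`. The resulting lower bound minus `α` is the polynomial of the statement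
divided by a positive factor, and that polynomial is positive on `[0, ρ)`.
-/

lemma one_add_ne_zero_of_norm_lt_one {x : ℂ} (hx : ‖x‖ < 1) : 1 + x ≠ 0 :=
  slitPlane_ne_zero (mem_slitPlane_of_norm_lt_one hx)

lemma one_sub_ne_zero_of_norm_lt_one {x : ℂ} (hx : ‖x‖ < 1) : 1 - x ≠ 0 := by
  simpa [sub_eq_add_neg] using one_add_ne_zero_of_norm_lt_one (x := -x) (by rwa [norm_neg])

lemma norm_mul_lt_one_of_mapsTo_closedBall {φ : ℂ → ℂ}
    (hφ : MapsTo φ (ball 0 1) (closedBall 0 1)) {z : ℂ} (hz : z ∈ ball (0 : ℂ) 1) :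
    ‖z * φ z‖ < 1 := by
  rw [norm_mul]
  exact mul_lt_one_of_nonneg_of_lt_one_left (norm_nonneg z) (mem_ball_zero_iff.1 hz)
    (mem_closedBall_zero_iff.1 (hφ hz))

noncomputable def blaschkeFactor (a : ℂ) (ζ : ℂ) : ℂ := (ζ - a) / (1 - conj a * ζ)

namespace blaschkeFactor

@[simp]
lemma apply_self (a : ℂ) : blaschkeFactor a a = 0 := by
  simp [blaschkeFactor]

lemma neg_apply_zero (a : ℂ) : blaschkeFactor (-a) 0 = a := by
  simp [blaschkeFactor]

lemma normSq_den_sub_normSq_num (a ζ : ℂ) :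
    normSq (1 - conj a * ζ) - normSq (ζ - a) = (1 - normSq a) * (1 - normSq ζ) := by
  simp only [normSq_apply, sub_re, sub_im, mul_re, mul_im, one_re, one_im, conj_re, conj_im]
  ring

lemma den_ne_zero {a ζ : ℂ} (ha : ‖a‖ ≤ 1) (hζ : ‖ζ‖ < 1) : 1 - conj a * ζ ≠ 0 :=
  one_sub_ne_zero_of_norm_lt_one <| by
    rw [norm_mul, norm_conj]; exact mul_lt_one_of_nonneg_of_lt_one_right ha (norm_nonneg ζ) hζ

lemma norm_lt_one {a ζ : ℂ} (ha : ‖a‖ < 1) (hζ : ‖ζ‖ < 1) : ‖blaschkeFactor a ζ‖ < 1 := by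
  have hden := den_ne_zero ha.le hζ
  rw [blaschkeFactor, norm_div, div_lt_one (norm_pos_iff.2 hden), ← sq_lt_sq₀ (norm_nonneg _)
    (norm_nonneg _), ← normSq_eq_norm_sq, ← normSq_eq_norm_sq, ← sub_pos,
    normSq_den_sub_normSq_num, normSq_eq_norm_sq, normSq_eq_norm_sq]
  apply mul_pos <;> nlinarith [norm_nonneg a, norm_nonneg ζ]

lemma mapsTo_ball {a : ℂ} (ha : ‖a‖ < 1) : MapsTo (blaschkeFactor a) (ball 0 1) (ball 0 1) :=
  fun _ hζ => mem_ball_zero_iff.2 (norm_lt_one ha (mem_ball_zero_iff.1 hζ))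

lemma hasDerivAt {a ζ : ℂ} (h : 1 - conj a * ζ ≠ 0) :
    HasDerivAt (blaschkeFactor a) ((1 - conj a * a) / (1 - conj a * ζ) ^ 2) ζ := by
  refine (((hasDerivAt_id' ζ).sub_const a).div
    (((hasDerivAt_id' ζ).const_mul (conj a)).const_sub 1) h).congr_deriv ?_
  ring

lemma differentiableOn {a : ℂ} (ha : ‖a‖ ≤ 1) : DifferentiableOn ℂ (blaschkeFactor a) (ball 0 1) :=
  fun _ hζ =>
    (hasDerivAt (den_ne_zero ha (mem_ball_zero_iff.1 hζ))).differentiableAt.differentiableWithinAt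

end blaschkeFactor

lemma norm_mul_one_add_le_of_norm_blaschkeFactor_le {a X : ℂ} {r : ℝ} (ha : ‖a‖ < 1)
    (hX : ‖X‖ < 1) (hB : ‖blaschkeFactor a X‖ ≤ r) : ‖X‖ * (1 + ‖a‖ * r) ≤ ‖a‖ + r := by
  have hden := blaschkeFactor.den_ne_zero ha.le hX
  have hnum : ‖X - a‖ ≤ r * ‖1 - conj a * X‖ := by
    rwa [blaschkeFactor, norm_div, div_le_iff₀ (norm_pos_iff.2 hden)] at hB
  have hden_ge : 1 - ‖a‖ * ‖X‖ ≤ ‖1 - conj a * X‖ := by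
    simpa [norm_mul, norm_conj] using norm_sub_norm_le (1 : ℂ) (conj a * X)
  have key := blaschkeFactor.normSq_den_sub_normSq_num a X
  simp only [normSq_eq_norm_sq] at key
  have hr : 0 ≤ r := (norm_nonneg _).trans hB
  have hA := norm_nonneg a
  have hx := norm_nonneg X
  rcases le_or_gt 1 r with hr1 | hr1
  · nlinarith [mul_nonneg (sub_nonneg.2 ha.le) (sub_nonneg.2 hr1),
      mul_le_mul_of_nonneg_right hX.le (by positivity : 0 ≤ 1 + ‖a‖ * r)]
  have hsq : (1 - ‖a‖ * ‖X‖) ^ 2 * (1 - r ^ 2) ≤ (1 - ‖a‖ ^ 2) * (1 - ‖X‖ ^ 2) := by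
    have hD : (1 - ‖a‖ * ‖X‖) ^ 2 ≤ ‖1 - conj a * X‖ ^ 2 :=
      pow_le_pow_left₀ (by nlinarith) hden_ge 2
    have hN : ‖X - a‖ ^ 2 ≤ r ^ 2 * ‖1 - conj a * X‖ ^ 2 := by
      rw [← mul_pow]; exact pow_le_pow_left₀ (norm_nonneg _) hnum 2
    nlinarith [mul_le_mul_of_nonneg_right hD (by nlinarith : 0 ≤ 1 - r ^ 2)]
  by_contra! hcon
  -- the quadratic in `‖X‖` below has roots `(‖a‖ ± r) / (1 ± ‖a‖ * r)`
  have hfac : ((1 + ‖a‖ * r) * ‖X‖ - (‖a‖ + r)) * ((1 - ‖a‖ * r) * ‖X‖ - (‖a‖ - r)) ≤ 0 := by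
    nlinarith
  have hF2 : (1 + ‖a‖ * r) * ‖X‖ - (‖a‖ + r) ≤ (1 - ‖a‖ * r) * ‖X‖ - (‖a‖ - r) := by
    nlinarith [mul_le_mul ha.le hX.le hx zero_le_one]
  nlinarith

section SchwarzPick

variable {h : ℂ → ℂ} {z : ℂ}

lemma norm_blaschkeFactor_le_of_mapsTo_ball (hd : DifferentiableOn ℂ h (ball 0 1))
    (hmaps : MapsTo h (ball 0 1) (ball 0 1)) (hz : ‖z‖ < 1) :
    ‖blaschkeFactor (h 0) (h z)‖ ≤ ‖z‖ := by
  have h0 : ‖h 0‖ < 1 := mem_ball_zero_iff.1 (hmaps (mem_ball_self one_pos))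
  exact norm_le_norm_of_mapsTo_ball ((blaschkeFactor.differentiableOn h0.le).comp hd hmaps)
    (((blaschkeFactor.mapsTo_ball h0).comp hmaps).mono_right ball_subset_closedBall) (by simp) hz

lemma norm_deriv_mul_le_of_mapsTo_ball (hd : DifferentiableOn ℂ h (ball 0 1))
    (hmaps : MapsTo h (ball 0 1) (ball 0 1)) (hz : ‖z‖ < 1) :
    ‖deriv h z‖ * (1 - ‖z‖ ^ 2) ≤ 1 - ‖h z‖ ^ 2 := by
  have hhz : ‖h z‖ < 1 := mem_ball_zero_iff.1 (hmaps (mem_ball_zero_iff.2 hz))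
  have hz' : ‖-z‖ < 1 := by rwa [norm_neg]
  set G := blaschkeFactor (h z) ∘ h ∘ blaschkeFactor (-z)
  have hmapsG : MapsTo G (ball 0 1) (ball 0 1) :=
    (blaschkeFactor.mapsTo_ball hhz).comp (hmaps.comp (blaschkeFactor.mapsTo_ball hz'))
  have hG0 : G 0 = 0 := by simp [G, blaschkeFactor.neg_apply_zero]
  have hdG : DifferentiableOn ℂ G (ball 0 1) :=
    (blaschkeFactor.differentiableOn hhz.le).comp
      (hd.comp (blaschkeFactor.differentiableOn hz'.le) (blaschkeFactor.mapsTo_ball hz'))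
      (hmaps.comp (blaschkeFactor.mapsTo_ball hz'))
  have hderiv : HasDerivAt G (deriv h z * (1 - ‖z‖ ^ 2 : ℝ) / (1 - ‖h z‖ ^ 2 : ℝ)) 0 := by
    have hT := blaschkeFactor.hasDerivAt (a := -z) (ζ := 0) (by simp)
    have hh : HasDerivAt h (deriv h z) (blaschkeFactor (-z) 0) := by
      rw [blaschkeFactor.neg_apply_zero]
      exact (hd.differentiableAt (isOpen_ball.mem_nhds (mem_ball_zero_iff.2 hz))).hasDerivAt
    have hB : HasDerivAt (blaschkeFactor (h z))
        ((1 - conj (h z) * h z) / (1 - conj (h z) * h z) ^ 2) ((h ∘ blaschkeFactor (-z)) 0) := by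
      rw [Function.comp_apply, blaschkeFactor.neg_apply_zero]
      exact blaschkeFactor.hasDerivAt (blaschkeFactor.den_ne_zero hhz.le hhz)
    refine (hB.comp 0 (hh.comp 0 hT)).congr_deriv ?_
    have hne : (1 : ℂ) - ((‖h z‖ ^ 2 : ℝ) : ℂ) ≠ 0 := by
      norm_cast; nlinarith [norm_nonneg (h z)]
    rw [map_neg, neg_mul_neg, conj_mul', conj_mul']
    push_cast at hne ⊢
    field_simp
    ring
  have hle := norm_deriv_le_one_of_mapsTo_ball hdG
    (by rw [hG0]; exact hmapsG.mono_right ball_subset_closedBall) one_pos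
  have hz2 : 0 < 1 - ‖z‖ ^ 2 := by nlinarith [norm_nonneg z]
  have hhz2 : 0 < 1 - ‖h z‖ ^ 2 := by nlinarith [norm_nonneg (h z)]
  rwa [hderiv.deriv, norm_div, norm_mul, norm_real, norm_real, Real.norm_of_nonneg hz2.le,
    Real.norm_of_nonneg hhz2.le, div_le_one hhz2] at hle

lemma mapsTo_ball_or_eqOn_of_mapsTo_closedBall (hd : DifferentiableOn ℂ h (ball 0 1))
    (hmaps : MapsTo h (ball 0 1) (closedBall 0 1)) :
    MapsTo h (ball 0 1) (ball 0 1) ∨ ∀ ζ ∈ ball (0 : ℂ) 1, h ζ = h 0 := by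
  refine or_iff_not_imp_left.2 fun hnot => ?_
  obtain ⟨ζ₀, hζ₀, hζ₀_norm⟩ : ∃ ζ₀ ∈ ball (0 : ℂ) 1, 1 ≤ ‖h ζ₀‖ := by
    simpa [MapsTo, mem_ball_zero_iff] using hnot
  have hmax : IsMaxOn (norm ∘ h) (ball 0 1) ζ₀ := fun ζ hζ =>
    (mem_closedBall_zero_iff.1 (hmaps hζ)).trans hζ₀_norm
  have hconst := eqOn_of_isPreconnected_of_isMaxOn_norm (convex_ball (0 : ℂ) 1).isPreconnected
    isOpen_ball hd hζ₀ hmax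
  intro ζ hζ
  rw [hconst hζ, hconst (mem_ball_self one_pos)]
  rfl

theorem norm_mul_one_add_le_of_mapsTo_closedBall (hd : DifferentiableOn ℂ h (ball 0 1))
    (hmaps : MapsTo h (ball 0 1) (closedBall 0 1)) (hz : ‖z‖ < 1) :
    ‖h z‖ * (1 + ‖h 0‖ * ‖z‖) ≤ ‖h 0‖ + ‖z‖ := by
  rcases mapsTo_ball_or_eqOn_of_mapsTo_closedBall hd hmaps with hball | hconst
  · exact norm_mul_one_add_le_of_norm_blaschkeFactor_le
      (mem_ball_zero_iff.1 (hball (mem_ball_self one_pos)))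
      (mem_ball_zero_iff.1 (hball (mem_ball_zero_iff.2 hz)))
      (norm_blaschkeFactor_le_of_mapsTo_ball hd hball hz)
  · have h0 : ‖h 0‖ ≤ 1 := mem_closedBall_zero_iff.1 (hmaps (mem_ball_self one_pos))
    rw [hconst z (mem_ball_zero_iff.2 hz)]
    nlinarith [mul_le_mul_of_nonneg_right (mul_le_one₀ h0 (norm_nonneg _) h0) (norm_nonneg z)]

theorem norm_deriv_mul_le_of_mapsTo_closedBall (hd : DifferentiableOn ℂ h (ball 0 1))
    (hmaps : MapsTo h (ball 0 1) (closedBall 0 1)) (hz : ‖z‖ < 1) :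
    ‖deriv h z‖ * (1 - ‖z‖ ^ 2) ≤ 1 - ‖h z‖ ^ 2 := by
  rcases mapsTo_ball_or_eqOn_of_mapsTo_closedBall hd hmaps with hball | hconst
  · exact norm_deriv_mul_le_of_mapsTo_ball hd hball hz
  · have hz' := mem_ball_zero_iff.2 hz
    have hhz : ‖h z‖ ≤ 1 := mem_closedBall_zero_iff.1 (hmaps hz')
    have hderiv : deriv h z = 0 := by
      rw [(eventuallyEq_of_mem (isOpen_ball.mem_nhds hz') hconst).deriv_eq, deriv_const]
    rw [hderiv, norm_zero, zero_mul]
    nlinarith [norm_nonneg (h z)]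

theorem norm_mul_add_mul_deriv_le (hd : DifferentiableOn ℂ h (ball 0 1))
    (hmaps : MapsTo h (ball 0 1) (closedBall 0 1)) (hz : ‖z‖ < 1) :
    ‖z * (h z + z * deriv h z)‖ ≤ ‖z‖ * (‖h z‖ + ‖z‖) * (1 - ‖z‖ * ‖h z‖) / (1 - ‖z‖ ^ 2) := by
  rw [le_div_iff₀ (by nlinarith [norm_nonneg z])]
  have hderiv := norm_deriv_mul_le_of_mapsTo_closedBall hd hmaps hz
  have htri : ‖z * (h z + z * deriv h z)‖ ≤ ‖z‖ * (‖h z‖ + ‖z‖ * ‖deriv h z‖) := by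
    rw [norm_mul]
    gcongr
    exact (norm_add_le _ _).trans_eq (by rw [norm_mul])
  calc ‖z * (h z + z * deriv h z)‖ * (1 - ‖z‖ ^ 2)
      ≤ ‖z‖ * (‖h z‖ + ‖z‖ * ‖deriv h z‖) * (1 - ‖z‖ ^ 2) := by
        gcongr; nlinarith [norm_nonneg z]
    _ = ‖z‖ * (‖h z‖ * (1 - ‖z‖ ^ 2) + ‖z‖ * (‖deriv h z‖ * (1 - ‖z‖ ^ 2))) := by ring
    _ ≤ ‖z‖ * (‖h z‖ * (1 - ‖z‖ ^ 2) + ‖z‖ * (1 - ‖h z‖ ^ 2)) := by gcongr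
    _ = ‖z‖ * (‖h z‖ + ‖z‖) * (1 - ‖z‖ * ‖h z‖) := by ring

end SchwarzPick

lemma iteratedDeriv_two_eq_two_mul_deriv_dslope {F : ℂ → ℂ} {U : Set ℂ} {c : ℂ} (hU : IsOpen U)
    (hc : c ∈ U) (hF : DifferentiableOn ℂ F U) :
    iteratedDeriv 2 F c = 2 * deriv (dslope F c) c := by
  have hF₁ : DifferentiableOn ℂ (dslope F c) U := (differentiableOn_dslope (hU.mem_nhds hc)).2 hF
  have hF_eq : ∀ ζ, F ζ = F c + (ζ - c) * dslope F c ζ := fun ζ => by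
    rw [← smul_eq_mul, sub_smul_dslope]; ring
  have hderiv : deriv F =ᶠ[𝓝 c] fun ζ => dslope F c ζ + (ζ - c) * deriv (dslope F c) ζ := by
    filter_upwards [hU.mem_nhds hc] with ζ hζ
    refine ((((((hasDerivAt_id' ζ).sub_const c).mul (hF₁.differentiableAt
      (hU.mem_nhds hζ)).hasDerivAt).const_add (F c)).congr_of_eventuallyEq
        (.of_forall hF_eq)).deriv).trans ?_
    ring
  have hR : HasDerivAt (fun ζ => dslope F c ζ + (ζ - c) * deriv (dslope F c) ζ)
      (2 * deriv (dslope F c) c) c := by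
    refine ((hF₁.differentiableAt (hU.mem_nhds hc)).hasDerivAt.add
      (((hasDerivAt_id' c).sub_const c).mul
        ((hF₁.deriv hU).differentiableAt (hU.mem_nhds hc)).hasDerivAt)).congr_deriv ?_
    ring
  rw [show (2 : ℕ) = 1 + 1 from rfl, iteratedDeriv_succ, iteratedDeriv_one, hderiv.deriv_eq,
    hR.deriv]

lemma norm_sub_one_div_add_one_lt_one {p : ℂ} (hp : 0 < p.re) : ‖(p - 1) / (p + 1)‖ < 1 := by
  have hpos : 0 < ‖p + 1‖ := norm_pos_iff.2 fun h => by
    have := congrArg re h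
    simp only [add_re, one_re, zero_re] at this
    linarith
  rw [norm_div, div_lt_one hpos, ← sq_lt_sq₀ (norm_nonneg _) (norm_nonneg _),
    ← normSq_eq_norm_sq, ← normSq_eq_norm_sq]
  simp only [normSq_apply, add_re, sub_re, add_im, sub_im, one_re, one_im]
  linarith

lemma exists_eq_mul_of_mapsTo_ball {w : ℂ → ℂ} (hd : DifferentiableOn ℂ w (ball 0 1))
    (hmaps : MapsTo w (ball 0 1) (ball 0 1)) (h0 : w 0 = 0) :
    ∃ ψ : ℂ → ℂ, DifferentiableOn ℂ ψ (ball 0 1) ∧ MapsTo ψ (ball 0 1) (closedBall 0 1) ∧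
      ψ 0 = deriv w 0 ∧ ∀ z, w z = z * ψ z := by
  refine ⟨dslope w 0, (differentiableOn_dslope (ball_mem_nhds 0 one_pos)).2 hd, fun z hz => ?_,
    dslope_same w 0, fun z => ?_⟩
  · simpa using norm_dslope_le_div_of_mapsTo_ball hd
      (by rw [h0]; exact hmaps.mono_right ball_subset_closedBall) hz
  · simpa [h0] using (sub_smul_dslope w 0 z).symm

lemma exists_eq_one_add_div_one_sub_of_re_pos {p : ℂ → ℂ} (hd : DifferentiableOn ℂ p (ball 0 1))
    (hre : ∀ z ∈ ball (0 : ℂ) 1, 0 < (p z).re) (h0 : p 0 = 1) :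
    ∃ φ : ℂ → ℂ, DifferentiableOn ℂ φ (ball 0 1) ∧ MapsTo φ (ball 0 1) (closedBall 0 1) ∧
      φ 0 = deriv p 0 / 2 ∧ ∀ z ∈ ball (0 : ℂ) 1, p z = (1 + z * φ z) / (1 - z * φ z) := by
  have hne : ∀ z ∈ ball (0 : ℂ) 1, p z + 1 ≠ 0 := fun z hz h => by
    have := congrArg re h
    simp only [add_re, one_re, zero_re] at this
    linarith [hre z hz]
  obtain ⟨φ, hφd, hφmaps, hφ0, hφ⟩ :=
    exists_eq_mul_of_mapsTo_ball (w := fun z => (p z - 1) / (p z + 1)) ((hd.sub_const 1).div (hd.add_const 1) hne)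
    (fun z hz => mem_ball_zero_iff.2 (norm_sub_one_div_add_one_lt_one (hre z hz))) (by simp [h0])
  refine ⟨φ, hφd, hφmaps, ?_, fun z hz => ?_⟩
  · have h0' : (0 : ℂ) ∈ ball 0 1 := mem_ball_self one_pos
    have hp := (hd.differentiableAt (isOpen_ball.mem_nhds h0')).hasDerivAt
    rw [hφ0, ((hp.sub_const 1).fun_div (hp.add_const 1) (hne 0 h0')).deriv, h0]
    ring
  · rw [← hφ z]
    have := hne z hz
    field_simp
    ring

theorem exists_schwarz_representation {f g : ℂ → ℂ} {b c : ℂ}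
    (hf : DifferentiableOn ℂ f (ball 0 1)) (hf0 : f 0 = 0) (hf1 : deriv f 0 = 1)
    (hf2 : iteratedDeriv 2 f 0 / 2 = 3 * b)
    (hg : DifferentiableOn ℂ g (ball 0 1)) (hg0 : g 0 = 0) (hg1 : deriv g 0 = 1)
    (hg2 : iteratedDeriv 2 g 0 / 2 = 2 * c)
    (hfg : ∀ z ∈ ball (0 : ℂ) 1, z ≠ 0 → ‖f z / g z - 1‖ < 1 ∧ 0 < (g z * (1 - z ^ 2) / z).re) :
    ∃ φ ψ : ℂ → ℂ, DifferentiableOn ℂ φ (ball 0 1) ∧ MapsTo φ (ball 0 1) (closedBall 0 1) ∧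
      DifferentiableOn ℂ ψ (ball 0 1) ∧ MapsTo ψ (ball 0 1) (closedBall 0 1) ∧
      φ 0 = c ∧ ψ 0 = 3 * b - 2 * c ∧ ∀ z ∈ ball (0 : ℂ) 1,
        f z = z * (1 + z * φ z) * (1 + z * ψ z) / ((1 - z * φ z) * (1 - z ^ 2)) := by
  have h0 : (0 : ℂ) ∈ ball 0 1 := mem_ball_self one_pos
  have hf₁ : DifferentiableOn ℂ (dslope f 0) (ball 0 1) :=
    (differentiableOn_dslope (ball_mem_nhds 0 one_pos)).2 hf
  have hg₁ : DifferentiableOn ℂ (dslope g 0) (ball 0 1) :=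
    (differentiableOn_dslope (ball_mem_nhds 0 one_pos)).2 hg
  have hf_eq (z : ℂ) : f z = z * dslope f 0 z := by simpa [hf0] using (sub_smul_dslope f 0 z).symm
  have hg_eq (z : ℂ) : g z = z * dslope g 0 z := by simpa [hg0] using (sub_smul_dslope g 0 z).symm
  have hf₁0 : dslope f 0 0 = 1 := by rw [dslope_same, hf1]
  have hg₁0 : dslope g 0 0 = 1 := by rw [dslope_same, hg1]
  have hf₁' : deriv (dslope f 0) 0 = 3 * b := by
    rw [← hf2, iteratedDeriv_two_eq_two_mul_deriv_dslope isOpen_ball h0 hf]; ring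
  have hg₁' : deriv (dslope g 0) 0 = 2 * c := by
    rw [← hg2, iteratedDeriv_two_eq_two_mul_deriv_dslope isOpen_ball h0 hg]; ring
  have hp_re : ∀ z ∈ ball (0 : ℂ) 1, 0 < (dslope g 0 z * (1 - z ^ 2)).re := by
    intro z hz
    rcases eq_or_ne z 0 with rfl | hz0
    · simp [hg1]
    · have := (hfg z hz hz0).2
      rwa [hg_eq z, mul_assoc, mul_div_cancel_left₀ _ hz0] at this
  have hg₁_ne : ∀ z ∈ ball (0 : ℂ) 1, dslope g 0 z ≠ 0 := fun z hz h => by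
    simpa [h] using hp_re z hz
  have hw_maps : MapsTo (fun z => dslope f 0 z / dslope g 0 z - 1) (ball 0 1) (ball 0 1) := by
    intro z hz
    rw [mem_ball_zero_iff]
    rcases eq_or_ne z 0 with rfl | hz0
    · simp [hf1, hg1]
    · simpa [hf_eq z, hg_eq z, mul_div_mul_left _ _ hz0] using (hfg z hz hz0).1
  obtain ⟨φ, hφd, hφmaps, hφ0, hφ⟩ := exists_eq_one_add_div_one_sub_of_re_pos
    (p := fun z => dslope g 0 z * (1 - z ^ 2)) (hg₁.mul (by fun_prop)) hp_re (by simp [hg1])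
  obtain ⟨ψ, hψd, hψmaps, hψ0, hψ⟩ := exists_eq_mul_of_mapsTo_ball
    (w := fun z => dslope f 0 z / dslope g 0 z - 1) ((hf₁.div hg₁ hg₁_ne).sub_const 1) hw_maps
    (by simp [hf1, hg1])
  have hf₁d := (hf₁.differentiableAt (isOpen_ball.mem_nhds h0)).hasDerivAt
  have hg₁d := (hg₁.differentiableAt (isOpen_ball.mem_nhds h0)).hasDerivAt
  refine ⟨φ, ψ, hφd, hφmaps, hψd, hψmaps, ?_, ?_, fun z hz => ?_⟩
  · rw [hφ0, (hg₁d.fun_mul ((hasDerivAt_pow 2 0).const_sub 1)).deriv, hg₁', hg₁0]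
    simp
  · rw [hψ0, ((hf₁d.fun_div hg₁d (hg₁_ne 0 h0)).sub_const 1).deriv, hf₁', hg₁', hf₁0, hg₁0]
    ring
  · have h1 := one_sub_ne_zero_of_norm_lt_one (norm_mul_lt_one_of_mapsTo_closedBall hφmaps hz)
    have h2 : (1 : ℂ) - z ^ 2 ≠ 0 := one_sub_ne_zero_of_norm_lt_one (by
      rw [norm_pow]; exact pow_lt_one₀ (norm_nonneg z) (mem_ball_zero_iff.1 hz) two_ne_zero)
    have hpz := hφ z hz
    have hwz := hψ z
    have hg₁z := hg₁_ne z hz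
    rw [hf_eq z]
    field_simp at hpz hwz ⊢
    linear_combination z * (1 - z ^ 2) * (1 - z * φ z) * hwz + z * (1 + z * ψ z) * hpz

lemma neg_div_one_add_le_re_div_one_sub {ζ : ℂ} (hζ : ‖ζ‖ < 1) :
    -(‖ζ‖ / (1 + ‖ζ‖)) ≤ (ζ / (1 - ζ)).re := by
  have hre : -‖ζ‖ ≤ ζ.re := neg_le_of_abs_le (abs_re_le_norm ζ)
  have hns : normSq (1 - ζ) = 1 - 2 * ζ.re + ‖ζ‖ ^ 2 := by
    rw [← normSq_eq_norm_sq]; simp only [normSq_apply, sub_re, sub_im, one_re, one_im]; ring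
  have hpos : 0 < normSq (1 - ζ) := normSq_pos.2 (one_sub_ne_zero_of_norm_lt_one hζ)
  have hm : ζ.re ^ 2 + ζ.im ^ 2 = ‖ζ‖ ^ 2 := by
    rw [← normSq_eq_norm_sq, normSq_apply]; ring
  rw [div_re, ← add_div, ← neg_div, div_le_div_iff₀ (by positivity) hpos, hns]
  simp only [sub_re, one_re, sub_im, one_im]
  nlinarith [mul_nonneg (sub_nonneg.2 hζ.le) (neg_le_iff_add_nonneg.1 hre), norm_nonneg ζ]

/-- The right-hand side is `(s₀ + r) / (1 + r s₀)` at the Schwarz–Pick bound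
`s₀ = (t + r) / (1 + t r)` for `s`. -/
lemma add_div_one_add_mul_le {r s t : ℝ} (hr0 : 0 ≤ r) (hr1 : r < 1) (hs : 0 ≤ s) (ht : 0 ≤ t)
    (hst : s * (1 + t * r) ≤ t + r) :
    (s + r) / (1 + r * s) ≤ (t * (1 + r ^ 2) + 2 * r) / (1 + 2 * t * r + r ^ 2) := by
  rw [div_le_div_iff₀ (by positivity) (by positivity)]
  nlinarith [mul_nonneg (sub_nonneg.2 hst) (by nlinarith : 0 ≤ 1 - r ^ 2)]

section Bounds

variable {φ : ℂ → ℂ} {z : ℂ}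

lemma norm_two_mul_div_one_sub_sq_le (hd : DifferentiableOn ℂ φ (ball 0 1))
    (hmaps : MapsTo φ (ball 0 1) (closedBall 0 1)) (hz : z ∈ ball (0 : ℂ) 1) :
    ‖2 * (z * (φ z + z * deriv φ z)) / (1 - (z * φ z) ^ 2)‖ ≤
      2 * ‖z‖ * (‖φ 0‖ * (1 + ‖z‖ ^ 2) + 2 * ‖z‖) /
        ((1 - ‖z‖ ^ 2) * (1 + 2 * ‖φ 0‖ * ‖z‖ + ‖z‖ ^ 2)) := by
  have hz1 := mem_ball_zero_iff.1 hz
  have hzφ := norm_mul_lt_one_of_mapsTo_closedBall hmaps hz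
  have hs1 : ‖φ z‖ ≤ 1 := mem_closedBall_zero_iff.1 (hmaps hz)
  have hr := norm_nonneg z
  have hs := norm_nonneg (φ z)
  have hrs : 0 < 1 - ‖z‖ * ‖φ z‖ := by rw [← norm_mul]; linarith
  have hr2 : 0 < 1 - ‖z‖ ^ 2 := by nlinarith
  have hden : (1 - ‖z‖ * ‖φ z‖) * (1 + ‖z‖ * ‖φ z‖) ≤ ‖1 - (z * φ z) ^ 2‖ := by
    have := norm_sub_norm_le (1 : ℂ) ((z * φ z) ^ 2)
    rw [norm_one, norm_pow, norm_mul] at this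
    linarith
  calc ‖2 * (z * (φ z + z * deriv φ z)) / (1 - (z * φ z) ^ 2)‖
      ≤ 2 * (‖z‖ * (‖φ z‖ + ‖z‖) * (1 - ‖z‖ * ‖φ z‖) / (1 - ‖z‖ ^ 2)) /
          ((1 - ‖z‖ * ‖φ z‖) * (1 + ‖z‖ * ‖φ z‖)) := by
        rw [norm_div, norm_mul, Complex.norm_two]
        gcongr
        exact norm_mul_add_mul_deriv_le hd hmaps hz1
    _ = 2 * ‖z‖ / (1 - ‖z‖ ^ 2) * ((‖φ z‖ + ‖z‖) / (1 + ‖z‖ * ‖φ z‖)) := by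
        field_simp
    _ ≤ 2 * ‖z‖ / (1 - ‖z‖ ^ 2) * ((‖φ 0‖ * (1 + ‖z‖ ^ 2) + 2 * ‖z‖) /
          (1 + 2 * ‖φ 0‖ * ‖z‖ + ‖z‖ ^ 2)) := by
        refine mul_le_mul_of_nonneg_left (add_div_one_add_mul_le hr hz1 hs (norm_nonneg _)
          (norm_mul_one_add_le_of_mapsTo_closedBall hd hmaps hz1)) (by positivity)
    _ = _ := by field_simp

lemma norm_div_one_add_le (hd : DifferentiableOn ℂ φ (ball 0 1))
    (hmaps : MapsTo φ (ball 0 1) (closedBall 0 1)) (hz : z ∈ ball (0 : ℂ) 1) :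
    ‖z * (φ z + z * deriv φ z) / (1 + z * φ z)‖ ≤
      ‖z‖ * (‖φ 0‖ * (1 + ‖z‖ ^ 2) + 2 * ‖z‖) / ((1 - ‖z‖ ^ 2) * (1 + ‖φ 0‖ * ‖z‖)) := by
  have hz1 := mem_ball_zero_iff.1 hz
  have hzφ := norm_mul_lt_one_of_mapsTo_closedBall hmaps hz
  have hr := norm_nonneg z
  have hrs : 0 < 1 - ‖z‖ * ‖φ z‖ := by rw [← norm_mul]; linarith
  have hr2 : 0 < 1 - ‖z‖ ^ 2 := by nlinarith
  have hden : 1 - ‖z‖ * ‖φ z‖ ≤ ‖1 + z * φ z‖ := by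
    simpa [norm_mul] using norm_sub_norm_le (1 : ℂ) (-(z * φ z))
  have hval := norm_mul_one_add_le_of_mapsTo_closedBall hd hmaps hz1
  calc ‖z * (φ z + z * deriv φ z) / (1 + z * φ z)‖
      ≤ ‖z‖ * (‖φ z‖ + ‖z‖) * (1 - ‖z‖ * ‖φ z‖) / (1 - ‖z‖ ^ 2) / (1 - ‖z‖ * ‖φ z‖) := by
        rw [norm_div]
        gcongr
        exact norm_mul_add_mul_deriv_le hd hmaps hz1
    _ = ‖z‖ * (‖φ z‖ + ‖z‖) / (1 - ‖z‖ ^ 2) := by field_simp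
    _ ≤ _ := by
        rw [div_le_div_iff₀ hr2 (by positivity)]
        nlinarith [mul_le_mul_of_nonneg_left hval (mul_nonneg hr hr2.le)]

end Bounds

lemma mul_deriv_div_eq {f φ ψ : ℂ → ℂ} {z : ℂ}
    (hf : f =ᶠ[𝓝 z] fun ζ => ζ * (1 + ζ * φ ζ) * (1 + ζ * ψ ζ) / ((1 - ζ * φ ζ) * (1 - ζ ^ 2)))
    (hφ : DifferentiableAt ℂ φ z) (hψ : DifferentiableAt ℂ ψ z) (hz : z ≠ 0)
    (h₁ : 1 + z * φ z ≠ 0) (h₂ : 1 - z * φ z ≠ 0) (h₃ : 1 + z * ψ z ≠ 0) (h₄ : 1 - z ^ 2 ≠ 0) :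
    z * deriv f z / f z = 1 + 2 * (z ^ 2 / (1 - z ^ 2)) +
      2 * (z * (φ z + z * deriv φ z)) / (1 - (z * φ z) ^ 2) +
        z * (ψ z + z * deriv ψ z) / (1 + z * ψ z) := by
  have hk₁ : HasDerivAt (fun ζ => ζ * φ ζ) (φ z + z * deriv φ z) z :=
    ((hasDerivAt_id' z).fun_mul hφ.hasDerivAt).congr_deriv (by ring)
  have hk₂ : HasDerivAt (fun ζ => ζ * ψ ζ) (ψ z + z * deriv ψ z) z :=
    ((hasDerivAt_id' z).fun_mul hψ.hasDerivAt).congr_deriv (by ring)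
  have hF := (((hasDerivAt_id' z).fun_mul (hk₁.const_add 1)).fun_mul (hk₂.const_add 1)).fun_div
    ((hk₁.const_sub 1).fun_mul ((hasDerivAt_pow 2 z).const_sub 1)) (mul_ne_zero h₂ h₄)
  rw [hf.deriv_eq, hF.deriv, hf.eq_of_nhds,
    show (1 : ℂ) - (z * φ z) ^ 2 = (1 - z * φ z) * (1 + z * φ z) by ring]
  field_simp
  ring

noncomputable def starlikeLowerBound (t u r : ℝ) : ℝ :=
  (1 - r ^ 2) / (1 + r ^ 2)
    - 2 * r * (t * (1 + r ^ 2) + 2 * r) / ((1 - r ^ 2) * (1 + 2 * t * r + r ^ 2))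
    - r * (u * (1 + r ^ 2) + 2 * r) / ((1 - r ^ 2) * (1 + u * r))

theorem starlikeLowerBound_le_re_mul_deriv_div {f φ ψ : ℂ → ℂ} {z : ℂ}
    (hφd : DifferentiableOn ℂ φ (ball 0 1)) (hφmaps : MapsTo φ (ball 0 1) (closedBall 0 1))
    (hψd : DifferentiableOn ℂ ψ (ball 0 1)) (hψmaps : MapsTo ψ (ball 0 1) (closedBall 0 1))
    (hf : ∀ ζ ∈ ball (0 : ℂ) 1,
      f ζ = ζ * (1 + ζ * φ ζ) * (1 + ζ * ψ ζ) / ((1 - ζ * φ ζ) * (1 - ζ ^ 2)))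
    (hz : z ∈ ball (0 : ℂ) 1) (hz0 : z ≠ 0) :
    starlikeLowerBound ‖φ 0‖ ‖ψ 0‖ ‖z‖ ≤ (z * deriv f z / f z).re := by
  have hzφ := norm_mul_lt_one_of_mapsTo_closedBall hφmaps hz
  have hzψ := norm_mul_lt_one_of_mapsTo_closedBall hψmaps hz
  have hz2 : ‖z ^ 2‖ < 1 := by
    rw [norm_pow]; exact pow_lt_one₀ (norm_nonneg z) (mem_ball_zero_iff.1 hz) two_ne_zero
  have hnhds := isOpen_ball.mem_nhds hz
  rw [mul_deriv_div_eq (eventually_of_mem hnhds hf) (hφd.differentiableAt hnhds)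
    (hψd.differentiableAt hnhds) hz0 (one_add_ne_zero_of_norm_lt_one hzφ)
    (one_sub_ne_zero_of_norm_lt_one hzφ) (one_add_ne_zero_of_norm_lt_one hzψ)
    (one_sub_ne_zero_of_norm_lt_one hz2)]
  have h₁ := neg_div_one_add_le_re_div_one_sub hz2
  have h₂ := (abs_le.1 (abs_re_le_norm (2 * (z * (φ z + z * deriv φ z)) / (1 - (z * φ z) ^ 2)))).1
  have h₃ := (abs_le.1 (abs_re_le_norm (z * (ψ z + z * deriv ψ z) / (1 + z * ψ z)))).1
  have h₂' := norm_two_mul_div_one_sub_sq_le hφd hφmaps hz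
  have h₃' := norm_div_one_add_le hψd hψmaps hz
  rw [norm_pow] at h₁
  have hsplit : (1 - ‖z‖ ^ 2) / (1 + ‖z‖ ^ 2) = 1 + 2 * -(‖z‖ ^ 2 / (1 + ‖z‖ ^ 2)) := by
    field_simp; ring
  simp only [starlikeLowerBound, add_re, one_re, mul_re, re_ofNat, im_ofNat, zero_mul, sub_zero]
  linarith

def starlikePoly (α u v r : ℝ) : ℝ :=
  (1 - α) - α * (u + v) * r - (7 + u * v + α + u * v * α) * r ^ 2 - (8 * u + 6 * v + u * α) * r ^ 3
    - (9 + 6 * u * v - α) * r ^ 4 - (8 * u + 2 * v - u * α - v * α) * r ^ 5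
    - (1 + u * v - α - u * v * α) * r ^ 6 + α * u * r ^ 7

lemma lt_starlikeLowerBound_of_starlikePoly_pos {α t u r : ℝ} (hr0 : 0 ≤ r) (hr1 : r < 1)
    (ht : 0 ≤ t) (hu : 0 ≤ u) (hQ : 0 < starlikePoly α u (2 * t) r) :
    α < starlikeLowerBound t u r := by
  have hr2 : 0 < 1 - r ^ 2 := by nlinarith
  have hden : 0 < (1 + r ^ 2) * (1 - r ^ 2) * (1 + 2 * t * r + r ^ 2) * (1 + u * r) := by
    positivity
  have key : starlikeLowerBound t u r - α = starlikePoly α u (2 * t) r /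
      ((1 + r ^ 2) * (1 - r ^ 2) * (1 + 2 * t * r + r ^ 2) * (1 + u * r)) := by
    unfold starlikeLowerBound starlikePoly
    field_simp
    ring
  linarith [div_pos hQ hden]

lemma pos_of_lt_of_forall_root_le {Q : ℝ → ℝ} (hQ : Continuous Q) (h0 : 0 < Q 0) {ρ : ℝ}
    (hρ : ρ ≤ 1) (hroots : ∀ r ∈ Ioo (0 : ℝ) 1, Q r = 0 → ρ ≤ r) {r : ℝ} (hr0 : 0 ≤ r)
    (hr : r < ρ) : 0 < Q r := by
  by_contra! hneg
  obtain ⟨x, hx, hQx⟩ := intermediate_value_Icc' hr0 hQ.continuousOn ⟨hneg, h0.le⟩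
  have hx0 : 0 < x := lt_of_le_of_ne hx.1 (by rintro rfl; exact h0.ne' hQx)
  linarith [hroots x ⟨hx0, by linarith [hx.2]⟩ hQx, hx.2]

theorem stmt_15_general (α : ℝ) (hα1 : α < 1)
    (b c : ℂ)
    (u : ℝ) (hu : u = ‖2 * c - 3 * b‖)
    (v : ℝ) (hv : v = ‖2 * c‖)
    (f : ℂ → ℂ) (hf : AnalyticOnNhd ℂ f (Metric.ball (0:ℂ) 1))
    (hf0 : f 0 = 0) (hf1 : deriv f 0 = 1)
    (hf2 : iteratedDeriv 2 f 0 / 2 = 3 * b)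
    (hg : ∃ g : ℂ → ℂ, AnalyticOnNhd ℂ g (Metric.ball (0:ℂ) 1) ∧
      g 0 = 0 ∧ deriv g 0 = 1 ∧ iteratedDeriv 2 g 0 / 2 = 2 * c ∧
      ∀ z ∈ Metric.ball (0:ℂ) 1, z ≠ 0 →
        ‖f z / g z - 1‖ < 1 ∧ 0 < (g z * (1 - z ^ 2) / z).re)
    (ρ : ℝ) (hρ : ρ ∈ Set.Ioo (0:ℝ) 1)
    (hsmall : ∀ r ∈ Set.Ioo (0:ℝ) 1, (1 - α) - α*(u + v)*r - (7 + u*v + α + u*v*α)*r^2 - (8*u + 6*v + u*α)*r^3 - (9 + 6*u*v - α)*r^4 - (8*u + 2*v - u*α - v*α)*r^5 - (1 + u*v - α - u*v*α)*r^6 + α*u*r^7 = 0 → ρ ≤ r) :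
    ∀ z : ℂ, 0 < ‖z‖ → ‖z‖ < ρ →
      (z * deriv f z / f z).re > α := by
  obtain ⟨g, hg, hg0, hg1, hg2, hfg⟩ := hg
  obtain ⟨φ, ψ, hφd, hφmaps, hψd, hψmaps, hφ0, hψ0, hf_eq⟩ :=
    exists_schwarz_representation hf.differentiableOn hf0 hf1 hf2 hg.differentiableOn hg0 hg1 hg2
      hfg
  intro z hz0 hzρ
  have hz : z ∈ ball (0 : ℂ) 1 := mem_ball_zero_iff.2 (hzρ.trans hρ.2)
  have hu' : u = ‖ψ 0‖ := by rw [hu, hψ0, norm_sub_rev]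
  have hv' : v = 2 * ‖φ 0‖ := by rw [hv, hφ0, norm_mul, Complex.norm_two]
  have hQ : 0 < starlikePoly α u v ‖z‖ :=
    pos_of_lt_of_forall_root_le (Q := starlikePoly α u v) (by unfold starlikePoly; fun_prop)
      (by simp [starlikePoly]; linarith) hρ.2.le hsmall (norm_nonneg z) hzρ
  rw [hu', hv'] at hQ
  calc α < starlikeLowerBound ‖φ 0‖ ‖ψ 0‖ ‖z‖ :=
        lt_starlikeLowerBound_of_starlikePoly_pos (norm_nonneg z) (mem_ball_zero_iff.1 hz)
          (norm_nonneg _) (norm_nonneg _) hQ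
    _ ≤ (z * deriv f z / f z).re :=
        starlikeLowerBound_le_re_mul_deriv_div hφd hφmaps hψd hψmaps hf_eq hz (norm_pos_iff.1 hz0)

theorem stmt_15 (α : ℝ) (hα : 0 ≤ α) (hα1 : α < 1)
    (b c : ℂ) (hb : ‖b‖ ≤ 1) (hc : ‖c‖ ≤ 1)
    (u : ℝ) (hu : u = ‖2 * c - 3 * b‖)
    (v : ℝ) (hv : v = ‖2 * c‖)
    (hu1 : u ≤ 1)
    (f : ℂ → ℂ) (hf : AnalyticOnNhd ℂ f (Metric.ball (0:ℂ) 1))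
    (hf0 : f 0 = 0) (hf1 : deriv f 0 = 1)
    (hf2 : iteratedDeriv 2 f 0 / 2 = 3 * b)
    (hg : ∃ g : ℂ → ℂ, AnalyticOnNhd ℂ g (Metric.ball (0:ℂ) 1) ∧
      g 0 = 0 ∧ deriv g 0 = 1 ∧ iteratedDeriv 2 g 0 / 2 = 2 * c ∧
      ∀ z ∈ Metric.ball (0:ℂ) 1, z ≠ 0 →
        ‖f z / g z - 1‖ < 1 ∧ 0 < (g z * (1 - z ^ 2) / z).re)
    (ρ : ℝ) (hρ : ρ ∈ Set.Ioo (0:ℝ) 1)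
    (hroot : (1 - α) - α*(u + v)*ρ - (7 + u*v + α + u*v*α)*ρ^2 - (8*u + 6*v + u*α)*ρ^3 - (9 + 6*u*v - α)*ρ^4 - (8*u + 2*v - u*α - v*α)*ρ^5 - (1 + u*v - α - u*v*α)*ρ^6 + α*u*ρ^7 = 0)
    (hsmall : ∀ r ∈ Set.Ioo (0:ℝ) 1, (1 - α) - α*(u + v)*r - (7 + u*v + α + u*v*α)*r^2 - (8*u + 6*v + u*α)*r^3 - (9 + 6*u*v - α)*r^4 - (8*u + 2*v - u*α - v*α)*r^5 - (1 + u*v - α - u*v*α)*r^6 + α*u*r^7 = 0 → ρ ≤ r) :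
    ∀ z : ℂ, 0 < ‖z‖ → ‖z‖ < ρ →
      (z * deriv f z / f z).re > α :=
  stmt_15_general α hα1 b c u hu v hv f hf hf0 hf1 hf2 hg ρ hρ hsmall
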